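/- Let A ∈ SL₂(ℝ) act on the upper half-plane ℍ by Möbius transformations. Then the hyperbolic distance from i to A·i satisfies d_ℍ(i, A·i) = 2 log ν(‖A‖), where ν(a) = √((a² + √(a⁴ − 4))/2) and ‖A‖ is the Frobenius norm of A. -/

import Mathlib

open UpperHalfPlane

/-- The Frobenius norm of a real 2×2 matrix: `‖A‖ = √(tr(AᵀA))`. -/
noncomputable def frobNorm (A : Matrix (Fin 2) (Fin 2) ℝ) : ℝ :=
  Real.sqrt (Matrix.trace (A.transpose * A))

/-- The function `ν(a) = √((a² + √(a⁴ − 4))/2)`. -/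
noncomputable def nu (a : ℝ) : ℝ := Real.sqrt ((a ^ 2 + Real.sqrt (a ^ 4 - 4)) / 2)

/-!
For `A = (a b; c d)` the point `w = A·i = (a i + b)/(c i + d)` has `Im w = 1/(c² + d²)` and
`|w|² = (a² + b²)/(c² + d²)`, so `cosh d(i, w) = (|w|² + 1)/(2 Im w)` equals `‖A‖²/2`.
On the other side `ν(a)² = a²/2 + √((a²/2)² − 1)`, i.e. `2 log ν(a) = arcosh (a²/2)`.
-/

open Real

lemma two_mul_log_nu (a : ℝ) : 2 * log (nu a) = arcosh (a ^ 2 / 2) := by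
  have h : √((a ^ 2 / 2) ^ 2 - 1) = √(a ^ 4 - 4) / 2 := by
    rw [show (a ^ 2 / 2) ^ 2 - 1 = (a ^ 4 - 4) / 2 ^ 2 by ring, sqrt_div' _ (by positivity),
      sqrt_sq zero_le_two]
  rw [nu, log_sqrt (by positivity), arcosh, h]
  ring_nf

lemma frobNorm_sq (M : Matrix (Fin 2) (Fin 2) ℝ) :
    frobNorm M ^ 2 = M 0 0 ^ 2 + M 0 1 ^ 2 + M 1 0 ^ 2 + M 1 1 ^ 2 := by
  have h : (M.transpose * M).trace = M 0 0 ^ 2 + M 0 1 ^ 2 + M 1 0 ^ 2 + M 1 1 ^ 2 := by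
    rw [Matrix.trace_fin_two, Matrix.mul_apply, Matrix.mul_apply, Fin.sum_univ_two,
      Fin.sum_univ_two]
    simp only [Matrix.transpose_apply]
    ring
  rw [frobNorm, h, sq_sqrt (by positivity)]

namespace UpperHalfPlane

lemma cosh_dist_I (w : ℍ) : cosh (dist I w) = (Complex.normSq w + 1) / (2 * w.im) := by
  have hw := w.im_pos
  rw [cosh_dist, Complex.dist_eq, Complex.sq_norm, Complex.normSq_apply, Complex.normSq_apply,
    Complex.sub_re, Complex.sub_im, coe_I, Complex.I_re, Complex.I_im, coe_im, I_im]
  field_simp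
  ring

section SpecialLinearGroup

variable (g : Matrix.SpecialLinearGroup (Fin 2) ℝ)

lemma coe_smul_I :
    (↑(g • I) : ℂ) = (g 0 0 * Complex.I + g 0 1) / (g 1 0 * Complex.I + g 1 1) := by
  simp [coe_specialLinearGroup_apply]

lemma im_smul_I : (g • I).im = 1 / (g 1 0 ^ 2 + g 1 1 ^ 2) := by
  rw [show g • I = Matrix.SpecialLinearGroup.mapGL ℝ g • I from rfl, im_smul_eq_div_normSq, denom]
  simp [add_comm _ (g 1 1 : ℂ), Complex.normSq_add_mul_I, add_comm (g 1 1 ^ 2)]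

lemma normSq_smul_I :
    Complex.normSq ↑(g • I) = (g 0 0 ^ 2 + g 0 1 ^ 2) / (g 1 0 ^ 2 + g 1 1 ^ 2) := by
  rw [coe_smul_I, Complex.normSq_div, add_comm (_ * Complex.I), add_comm (_ * Complex.I),
    Complex.normSq_add_mul_I, Complex.normSq_add_mul_I, add_comm (g 0 1 ^ 2),
    add_comm (g 1 1 ^ 2)]

lemma cosh_dist_I_smul_I : cosh (dist I (g • I)) = frobNorm g ^ 2 / 2 := by
  have hS : 0 < g 1 0 ^ 2 + g 1 1 ^ 2 := one_div_pos.mp (im_smul_I g ▸ (g • I).im_pos)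
  rw [cosh_dist_I, normSq_smul_I, im_smul_I, frobNorm_sq]
  field_simp
  ring

end SpecialLinearGroup

end UpperHalfPlane

theorem dist_I_smul_I_general (A : Matrix.SpecialLinearGroup (Fin 2) ℝ) :
    dist UpperHalfPlane.I (A • UpperHalfPlane.I) = 2 * Real.log (nu (frobNorm A.1)) := by
  rw [two_mul_log_nu, ← cosh_dist_I_smul_I, arcosh_cosh dist_nonneg]

/-- For `A ∈ SL₂(ℝ)` with `A·i ≠ i`, the hyperbolic distance from `i` to `A·i` is
`2 log ν(‖A‖)`, where `‖A‖` is the Frobenius norm of `A`. -/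
theorem dist_I_smul_I (A : Matrix.SpecialLinearGroup (Fin 2) ℝ)
    (hA : A • UpperHalfPlane.I ≠ UpperHalfPlane.I) :
    dist UpperHalfPlane.I (A • UpperHalfPlane.I) = 2 * Real.log (nu (frobNorm A.1)) :=
  dist_I_smul_I_general A
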